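/- Let k be an algebraically closed field of characteristic 3. The 4×4 matrix M with rows (0, a₁, a₂, a₂), (0,0,0,0), (0,0,1,1), (0,0,-1,-1) over k satisfies M² = 0 and, when a₁ ≠ 0, has rank 2. -/

import Mathlib

namespace Matrix

variable {R m n : Type*}

theorem two_mul_rank_le_card_of_mul_self_eq_zero [Field R] [Fintype n] {A : Matrix n n R}
    (hA : A * A = 0) : 2 * A.rank ≤ Fintype.card n := by
  have := rank_add_rank_le_card_of_mul_eq_zero hA
  omega

theorem card_le_rank_of_det_submatrix_ne_zero [CommRing R] [IsDomain R] [Fintype n]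
    {l : Type*} [Fintype l] [DecidableEq l] (A : Matrix m n R) (r : l → m) (c : l → n)
    (h : (A.submatrix r c).det ≠ 0) : Fintype.card l ≤ A.rank :=
  (rank_of_det_ne_zero h).symm.le.trans (rank_submatrix_le A r c)

end Matrix

theorem stmt_0_general (k : Type) [Field k] (a₁ a₂ : k)
    (M : Matrix (Fin 4) (Fin 4) k)
    (hM : M = !![0, a₁, a₂, a₂; 0, 0, 0, 0; 0, 0, 1, 1; 0, 0, -1, -1]) :
    M * M = 0 ∧ (a₁ ≠ 0 → M.rank = 2) := by
  have hsq : M * M = 0 := by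
    subst hM
    ext i j
    fin_cases i <;> fin_cases j <;> simp [Matrix.mul_apply, Fin.sum_univ_four]
  refine ⟨hsq, fun ha => le_antisymm ?_ ?_⟩
  · have := Matrix.two_mul_rank_le_card_of_mul_self_eq_zero hsq
    simp only [Fintype.card_fin] at this
    omega
  · -- the minor on rows 0, 2 and columns 1, 2 is `!![a₁, a₂; 0, 1]`
    have hminor := M.card_le_rank_of_det_submatrix_ne_zero ![0, 2] ![1, 2]
      (by rw [Matrix.det_fin_two]; simpa [hM] using ha)
    simpa using hminor

/-- Over an algebraically closed field `k` of characteristic `3`, the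
4×4 matrix with rows `(0, a₁, a₂, a₂)`, `(0,0,0,0)`, `(0,0,1,1)`, `(0,0,-1,-1)`
squares to zero, and has rank 2 when `a₁ ≠ 0`. -/
theorem stmt_0 (k : Type) [Field k] [IsAlgClosed k] [CharP k 3] (a₁ a₂ : k)
    (M : Matrix (Fin 4) (Fin 4) k)
    (hM : M = !![0, a₁, a₂, a₂; 0, 0, 0, 0; 0, 0, 1, 1; 0, 0, -1, -1]) :
    M * M = 0 ∧ (a₁ ≠ 0 → M.rank = 2) :=
  stmt_0_general k a₁ a₂ M hM
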